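/- arXiv:2305.06465 — 2 statements merged into one kernel-verified Lean document; each statement's English description precedes it below -/
import Mathlib

section
/- Let F be a rank-k canonical exponential family with log-partition A and conjugate prior ρ_F(θ) = H(τ, m) exp(⟨τ,θ⟩ − m A(θ)), and let N be the linearly nested submodel with parameter η ∈ ℝ^ℓ, θ = Mᵀη for a full-rank ℓ×k matrix M, log-partition B(η) = A(Mᵀη), and conjugate prior ρ_N(η) = G(υ, w) exp(⟨υ, η⟩ − w B(η)). Then the minimum over (υ, w) of the cross-entropy-type quantity −E_N[log(ρ_F(Mᵀη)/ρ_N(η))] equals log(G(Mτ, m)/H(τ, m)), and this minimum is achieved at υ = Mτ and w = m. -/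
open MeasureTheory Matrix

/-!
Writing `q(η) = ρ_F(Mᵀη)`, the exponent of `ρ_F` becomes `⟨Mτ, η⟩ − m B(η)`, so `q` is the
unnormalised nested conjugate density with hyperparameters `(Mτ, m)` scaled by `H(τ, m)`, and
`∫ q = H(τ, m) / G(Mτ, m)`. Gibbs' inequality `∫ p log (q / p) ≤ log ∫ q` for a probability
density `p` bounds the objective below by `log (G(Mτ, m) / H(τ, m))`, with equality when `p` is
`q` normalised, i.e. when `p = ρ_N(·; Mτ, m)`.
-/

namespace Real

theorem mul_log_div_le (p q Z : ℝ) (hp : 0 ≤ p) (hq : 0 < q) (hZ : 0 < Z) :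
    p * log (q / p) ≤ q / Z - p + p * log Z := by
  rcases hp.eq_or_lt with rfl | hp
  · simpa using (div_pos hq hZ).le
  have hlog : log (q / p) = log (q / p / Z) + log Z := by
    rw [log_div (by positivity) hZ.ne']
    ring
  have hle : log (q / p / Z) ≤ q / p / Z - 1 := log_le_sub_one_of_pos (by positivity)
  calc p * log (q / p) = p * log (q / p / Z) + p * log Z := by rw [hlog, mul_add]
    _ ≤ p * (q / p / Z - 1) + p * log Z := by gcongr
    _ = q / Z - p + p * log Z := by field_simp

end Real

section Gibbs

variable {α : Type*} [MeasurableSpace α] {μ : Measure α} {p q : α → ℝ}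

theorem integral_mul_log_div_le_log_integral (hp : 0 ≤ᵐ[μ] p) (hq : ∀ᵐ x ∂μ, 0 < q x)
    (hp_int : Integrable p μ) (hp_one : ∫ x, p x ∂μ = 1) (hq_int : Integrable q μ)
    (hZ : 0 < ∫ x, q x ∂μ) (h : Integrable (fun x => p x * Real.log (q x / p x)) μ) :
    ∫ x, p x * Real.log (q x / p x) ∂μ ≤ Real.log (∫ x, q x ∂μ) := by
  set Z := ∫ x, q x ∂μ
  have hq_scaled : Integrable (fun x => q x / Z) μ := hq_int.div_const Z
  have hdiff : Integrable (fun x => q x / Z - p x) μ := hq_scaled.sub hp_int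
  have hp_log : Integrable (fun x => p x * Real.log Z) μ := hp_int.mul_const _
  calc ∫ x, p x * Real.log (q x / p x) ∂μ
      ≤ ∫ x, (q x / Z - p x + p x * Real.log Z) ∂μ := by
        refine integral_mono_ae h (hdiff.add hp_log) ?_
        filter_upwards [hp, hq] with x hpx hqx
        exact Real.mul_log_div_le _ _ _ hpx hqx hZ
    _ = Real.log Z := by
        rw [integral_add hdiff hp_log, integral_sub hq_scaled hp_int, integral_div,
          integral_mul_const, hp_one, div_self hZ.ne']
        ring

theorem integral_mul_log_div_of_eq_div_integral (hp : ∀ x, p x = q x / ∫ y, q y ∂μ)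
    (hZ : ∫ x, q x ∂μ ≠ 0) :
    ∫ x, p x * Real.log (q x / p x) ∂μ = Real.log (∫ x, q x ∂μ) := by
  have hpt (x : α) :
      p x * Real.log (q x / p x) = q x / (∫ y, q y ∂μ) * Real.log (∫ y, q y ∂μ) := by
    rw [hp x]
    rcases eq_or_ne (q x) 0 with hqx | hqx
    · simp [hqx]
    · rw [div_div_cancel₀ hqx]
  simp only [hpt, integral_mul_const, integral_div, div_self hZ, one_mul]

end Gibbs

theorem stmt_9_general (k l : ℕ) (M : Matrix (Fin l) (Fin k) ℝ)
    (A : (Fin k → ℝ) → ℝ) (τ : Fin k → ℝ) (m : ℝ)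
    (IH : (Fin k → ℝ) → ℝ → ℝ)
    (H : (Fin k → ℝ) → ℝ → ℝ) (hH : H = fun τ' m' => (IH τ' m')⁻¹)
    (B : (Fin l → ℝ) → ℝ) (hB : B = fun η => A (M.transpose.mulVec η))
    (IG : (Fin l → ℝ) → ℝ → ℝ)
    (hIG : IG = fun υ w => ∫ η : Fin l → ℝ, Real.exp ((∑ j, υ j * η j) - w * B η))
    (G : (Fin l → ℝ) → ℝ → ℝ) (hG : G = fun υ w => (IG υ w)⁻¹)
    (ρF : (Fin k → ℝ) → ℝ)
    (hρF : ρF = fun θ => H τ m * Real.exp ((∑ i, τ i * θ i) - m * A θ))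
    (ρN : (Fin l → ℝ) → ℝ → (Fin l → ℝ) → ℝ)
    (hρN : ρN = fun υ w η => G υ w * Real.exp ((∑ j, υ j * η j) - w * B η))
    (obj : (Fin l → ℝ) → ℝ → ℝ)
    (hobj : obj = fun υ w =>
      -∫ η : Fin l → ℝ, ρN υ w η * Real.log (ρF (M.transpose.mulVec η) / ρN υ w η))
    (hIHpos : 0 < IH τ m) (hIGpos : 0 < IG (M.mulVec τ) m) :
    obj (M.mulVec τ) m = Real.log (G (M.mulVec τ) m / H τ m) ∧
    ∀ υ : Fin l → ℝ, ∀ w : ℝ, 0 < IG υ w →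
      Integrable (fun η : Fin l → ℝ =>
        ρN υ w η * Real.log (ρF (M.transpose.mulVec η) / ρN υ w η)) →
      Real.log (G (M.mulVec τ) m / H τ m) ≤ obj υ w := by
  set E : (Fin l → ℝ) → ℝ → (Fin l → ℝ) → ℝ :=
    fun υ w η => Real.exp ((∑ j, υ j * η j) - w * B η)
  have hIG_eq (υ w) : IG υ w = ∫ η, E υ w η := by rw [hIG]
  have hρN_eq (υ w η) : ρN υ w η = (IG υ w)⁻¹ * E υ w η := by rw [hρN, hG]
  have hH_pos : 0 < H τ m := by rw [hH]; exact inv_pos.mpr hIHpos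
  have hq_eq (η : Fin l → ℝ) : ρF (Mᵀ *ᵥ η) = H τ m * E (M *ᵥ τ) m η := by
    have hexp : ∑ i, τ i * (Mᵀ *ᵥ η) i = ∑ j, (M *ᵥ τ) j * η j := by
      change τ ⬝ᵥ Mᵀ *ᵥ η = M *ᵥ τ ⬝ᵥ η
      rw [dotProduct_transpose_mulVec, dotProduct_comm]
    simp only [hρF, hexp, E, hB]
  have hZ : ∫ η, ρF (Mᵀ *ᵥ η) = H τ m * IG (M *ᵥ τ) m := by
    simp only [hq_eq, integral_const_mul, hIG_eq]
  have hZ_pos : 0 < ∫ η, ρF (Mᵀ *ᵥ η) := hZ ▸ mul_pos hH_pos hIGpos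
  have hvalue : Real.log (G (M *ᵥ τ) m / H τ m) = -Real.log (∫ η, ρF (Mᵀ *ᵥ η)) := by
    rw [hZ, hG, ← Real.log_inv, div_eq_inv_mul, mul_inv]
  refine ⟨?_, fun υ w hIGυ hint => ?_⟩
  · rw [hobj, hvalue, neg_inj]
    refine integral_mul_log_div_of_eq_div_integral (fun η => ?_) hZ_pos.ne'
    rw [hρN_eq, hq_eq, hZ]
    field_simp
  · rw [hobj, hvalue, neg_le_neg_iff]
    refine integral_mul_log_div_le_log_integral (.of_forall fun η => ?_)
      (.of_forall fun η => ?_) ?_ ?_ (.of_integral_ne_zero hZ_pos.ne') hZ_pos hint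
    · rw [hρN_eq]; positivity
    · rw [hq_eq]; positivity
    · have hE_int : Integrable (E υ w) := .of_integral_ne_zero (hIG_eq υ w ▸ hIGυ.ne')
      exact (hE_int.const_mul _).congr (.of_forall fun η => (hρN_eq υ w η).symm)
    · simp only [hρN_eq, integral_const_mul, ← hIG_eq, inv_mul_cancel₀ hIGυ.ne']

/-- Encompassing-prior matching (Theorem 2.2, first part): for the conjugate prior
`ρ_F(θ) = H(τ,m) exp(⟨τ,θ⟩ − m A θ)` of the full model and conjugate priors
`ρ_N(η; υ, w) = G(υ,w) exp(⟨υ,η⟩ − w A(Mᵀη))` of the linearly nested submodel, the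
quantity `−E_N[log(ρ_F(Mᵀη)/ρ_N(η))]` attains its minimum value
`log(G(Mτ, m)/H(τ, m))` at `υ = Mτ`, `w = m`. -/
theorem stmt_9 (k l : ℕ) (M : Matrix (Fin l) (Fin k) ℝ) (hM : M.rank = l)
    (A : (Fin k → ℝ) → ℝ) (τ : Fin k → ℝ) (m : ℝ) (hm : 0 < m)
    (IH : (Fin k → ℝ) → ℝ → ℝ)
    (hIH : IH = fun τ' m' => ∫ θ : Fin k → ℝ, Real.exp ((∑ i, τ' i * θ i) - m' * A θ))
    (H : (Fin k → ℝ) → ℝ → ℝ) (hH : H = fun τ' m' => (IH τ' m')⁻¹)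
    (B : (Fin l → ℝ) → ℝ) (hB : B = fun η => A (M.transpose.mulVec η))
    (IG : (Fin l → ℝ) → ℝ → ℝ)
    (hIG : IG = fun υ w => ∫ η : Fin l → ℝ, Real.exp ((∑ j, υ j * η j) - w * B η))
    (G : (Fin l → ℝ) → ℝ → ℝ) (hG : G = fun υ w => (IG υ w)⁻¹)
    (ρF : (Fin k → ℝ) → ℝ)
    (hρF : ρF = fun θ => H τ m * Real.exp ((∑ i, τ i * θ i) - m * A θ))
    (ρN : (Fin l → ℝ) → ℝ → (Fin l → ℝ) → ℝ)
    (hρN : ρN = fun υ w η => G υ w * Real.exp ((∑ j, υ j * η j) - w * B η))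
    (obj : (Fin l → ℝ) → ℝ → ℝ)
    (hobj : obj = fun υ w =>
      -∫ η : Fin l → ℝ, ρN υ w η * Real.log (ρF (M.transpose.mulVec η) / ρN υ w η))
    (hIHpos : 0 < IH τ m) (hIGpos : 0 < IG (M.mulVec τ) m)
    (hInt0 : Integrable (fun η : Fin l → ℝ =>
      ρN (M.mulVec τ) m η * Real.log (ρF (M.transpose.mulVec η) / ρN (M.mulVec τ) m η))) :
    obj (M.mulVec τ) m = Real.log (G (M.mulVec τ) m / H τ m) ∧
    ∀ υ : Fin l → ℝ, ∀ w : ℝ, 0 < IG υ w →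
      Integrable (fun η : Fin l → ℝ =>
        ρN υ w η * Real.log (ρF (M.transpose.mulVec η) / ρN υ w η)) →
      Real.log (G (M.mulVec τ) m / H τ m) ≤ obj υ w :=
  stmt_9_general k l M A τ m IH H hH B hB IG hIG G hG ρF hρF ρN hρN obj hobj hIHpos hIGpos
end

section
/- Let G be the complete graph on n_v vertices with n possible edges, modeled by a rank-1 K-block SBM with known memberships, where the within/between block edge counts satisfy S_{ij} ≥ 1 and Σ_{i≤j} S_{ij} = n, and all O_{ij} = 0. With independent Beta(2,1) priors on the latent positions x_1,...,x_K, the evidence equals E_SBM = 2^K · Π_{i=1}^K 1/(2S_{ii} + Σ_{j≠i} S_{ij} + 2), and since Σ_{i=1}^K (2S_{ii} + Σ_{j≠i} S_{ij} + 2) = 2n + 2K and each factor exceeds 2, the product lemma yields E_SBM < 1/(n+1) = E_ER. Hence ER has strictly larger evidence than the SBM on the complete graph. -/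
/-!
The SBM evidence is `2^K / ∏ aᵢ` with `aᵢ = dᵢ + 2`, where `dᵢ` counts the edge endpoints in
block `i`. Every edge has two endpoints, so `∑ aᵢ = 2n + 2K`. Writing `aᵢ = 2 (1 + yᵢ)` with
`yᵢ > 0`, the expansion `∏ (1 + yᵢ) > 1 + ∑ yᵢ` (strict as soon as there are two factors) gives
`∏ aᵢ > 2^K (n + 1)`, i.e. `E_SBM < 1/(n+1) = E_ER`.
-/

open Finset

namespace Finset

variable {ι R : Type*}

theorem one_add_sum_le_prod_one_add [CommSemiring R] [PartialOrder R] [IsOrderedRing R]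
    (s : Finset ι) {y : ι → R} (hy : ∀ i ∈ s, 0 ≤ y i) :
    1 + ∑ i ∈ s, y i ≤ ∏ i ∈ s, (1 + y i) := by
  induction s using Finset.cons_induction with
  | empty => simp
  | cons a t ha ih =>
    rw [sum_cons, prod_cons]
    have hya : 0 ≤ y a := hy a (mem_cons_self a t)
    have hyt : ∀ i ∈ t, 0 ≤ y i := fun i hi => hy i (mem_cons_of_mem hi)
    calc 1 + (y a + ∑ i ∈ t, y i)
        ≤ 1 + (y a + ∑ i ∈ t, y i) + y a * ∑ i ∈ t, y i :=
          le_add_of_nonneg_right (mul_nonneg hya (sum_nonneg hyt))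
      _ = (1 + y a) * (1 + ∑ i ∈ t, y i) := by ring
      _ ≤ (1 + y a) * ∏ i ∈ t, (1 + y i) :=
          mul_le_mul_of_nonneg_left (ih hyt) (add_nonneg zero_le_one hya)

theorem one_add_sum_lt_prod_one_add [CommSemiring R] [PartialOrder R] [IsStrictOrderedRing R]
    {s : Finset ι} (hs : s.Nontrivial) {y : ι → R} (hy : ∀ i ∈ s, 0 < y i) :
    1 + ∑ i ∈ s, y i < ∏ i ∈ s, (1 + y i) := by
  classical
  obtain ⟨a, ha⟩ := hs.nonempty
  have t_ne : (s.erase a).Nonempty := hs.erase_nonempty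
  have hyt : ∀ i ∈ s.erase a, 0 < y i := fun i hi => hy i (mem_of_mem_erase hi)
  rw [← add_sum_erase s _ ha, ← mul_prod_erase s _ ha]
  calc 1 + (y a + ∑ i ∈ s.erase a, y i)
      < 1 + (y a + ∑ i ∈ s.erase a, y i) + y a * ∑ i ∈ s.erase a, y i :=
        lt_add_of_pos_right _ (mul_pos (hy a ha) (sum_pos hyt t_ne))
    _ = (1 + y a) * (1 + ∑ i ∈ s.erase a, y i) := by ring
    _ ≤ (1 + y a) * ∏ i ∈ s.erase a, (1 + y i) :=
        mul_le_mul_of_nonneg_left (one_add_sum_le_prod_one_add _ fun i hi => (hyt i hi).le)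
          (add_nonneg zero_le_one (hy a ha).le)

theorem two_pow_card_mul_lt_prod [Field R] [LinearOrder R] [IsStrictOrderedRing R]
    {s : Finset ι} (hs : s.Nontrivial) {x : ι → R} (hx : ∀ i ∈ s, 2 < x i) :
    2 ^ #s * ((∑ i ∈ s, x i) / 2 - #s + 1) < ∏ i ∈ s, x i := by
  have hy : ∀ i ∈ s, 0 < x i / 2 - 1 := fun i hi => by linarith [hx i hi]
  calc 2 ^ #s * ((∑ i ∈ s, x i) / 2 - #s + 1)
      = 2 ^ #s * (1 + ∑ i ∈ s, (x i / 2 - 1)) := by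
        rw [sum_sub_distrib, ← sum_div, sum_const, nsmul_one]; ring
    _ < 2 ^ #s * ∏ i ∈ s, (1 + (x i / 2 - 1)) :=
        mul_lt_mul_of_pos_left (one_add_sum_lt_prod_one_add hs hy) (by positivity)
    _ = ∏ i ∈ s, x i := by
        rw [← prod_const, ← prod_mul_distrib]
        exact prod_congr rfl fun i _ => by ring

theorem sum_two_smul_diag_add_sum_ne [AddCommMonoid R] [Fintype ι] [LinearOrder ι]
    {S : ι → ι → R} (hS : ∀ i j, S i j = S j i) :
    ∑ i, (2 • S i i + ∑ j with j ≠ i, S i j) = 2 • ∑ i, ∑ j with i ≤ j, S i j := by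
  have row : ∀ i, 2 • S i i + ∑ j with j ≠ i, S i j
      = ∑ j with i ≤ j, S i j + ∑ j with j ≤ i, S i j := by
    intro i
    rw [← Fintype.sum_ite_eq i (fun j => 2 • S i j), sum_filter, sum_filter, sum_filter,
      ← sum_add_distrib, ← sum_add_distrib]
    refine sum_congr rfl fun j _ => ?_
    rcases lt_trichotomy i j with h | rfl | h
    · simp [h.ne, h.ne', h.le, not_le.2 h]
    · simp [two_smul]
    · simp [h.ne, h.ne', h.le, not_le.2 h]
  have lower_eq_upper : ∑ i, ∑ j with j ≤ i, S i j = ∑ i, ∑ j with i ≤ j, S i j := by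
    simp only [sum_filter]
    rw [sum_comm]
    exact sum_congr rfl fun i _ => sum_congr rfl fun j _ => by rw [hS]
  rw [sum_congr rfl fun i _ => row i, sum_add_distrib, lower_eq_upper, two_smul]

end Finset

/-- Complete graph, rank-1 K-block SBM with known memberships: with Beta(2,1) priors the
evidence is `E_SBM = 2^K ∏ 1/(2S_ii + Σ_{j≠i} S_ij + 2)`; since the `K` factors
`2S_ii + Σ_{j≠i} S_ij + 2` exceed 2 and sum to `2n + 2K`, the product lemma gives
`E_SBM < 1/(n+1) = E_ER`, so ER has strictly larger evidence. -/
theorem stmt_14 (K n : ℕ) (hK : 2 ≤ K) (S : Fin K → Fin K → ℕ)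
    (hsym : ∀ i j, S i j = S j i) (hpos : ∀ i j, 1 ≤ S i j)
    (hsum : ∑ i, ∑ j ∈ Finset.univ.filter (fun j => i ≤ j), S i j = n)
    (d : Fin K → ℕ)
    (hd : d = fun i => 2 * S i i + ∑ j ∈ Finset.univ.filter (fun j => j ≠ i), S i j) :
    (∑ i, ((d i : ℝ) + 2)) = 2 * n + 2 * K ∧
    (2:ℝ) ^ K * ∏ i, 1 / ((d i : ℝ) + 2) < 1 / ((n : ℝ) + 1) := by
  have hdeg : ∑ i, d i = 2 * n := by
    simpa only [hd, hsum, smul_eq_mul] using sum_two_smul_diag_add_sum_ne hsym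
  have htotal : ∑ i, ((d i : ℝ) + 2) = 2 * n + 2 * K := by
    rw [sum_add_distrib, ← Nat.cast_sum, hdeg]
    simp [mul_comm]
  refine ⟨htotal, ?_⟩
  have hfactor : ∀ i ∈ univ, 2 < (d i : ℝ) + 2 := fun i _ => by
    have : 1 ≤ d i := by simp only [hd]; have := hpos i i; omega
    have : (1 : ℝ) ≤ d i := by exact_mod_cast this
    linarith
  have hnontriv : (univ : Finset (Fin K)).Nontrivial := by
    rw [← one_lt_card_iff_nontrivial, card_univ, Fintype.card_fin]; omega
  have hprod := two_pow_card_mul_lt_prod hnontriv hfactor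
  rw [card_univ, Fintype.card_fin, htotal,
    show (2 * n + 2 * K : ℝ) / 2 - K + 1 = n + 1 by ring] at hprod
  rw [prod_div_distrib, prod_const_one, mul_one_div,
    div_lt_div_iff₀ (prod_pos fun i hi => by linarith [hfactor i hi]) (by positivity)]
  linarith
end
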